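/- arXiv:2301.09804 — 2 statements merged into one kernel-verified Lean document; each statement's English description precedes it below -/
import Mathlib

section
/- Let $p$ be a prime, $q = p^n$ with $n \ge 1$. Consider the free abelian group $\overline{G}$ with basis $\{u_r : 1 \le r \le pq,\ \gcd(r,p)=1\}$ and the relations on products, as derived from Green's formulas: for $r$ coprime to $p$, write $r = q r_0 + r_1$ with $0 < r_1 < q$ and set $\bar r = q r_0 + (q - r_1)$. Then the element $u_{2q-1}$ satisfies: $u_{2q-1} u_r = u_{\bar r + q}$ for $1 \le r \le q$; $u_{2q-1} u_r = u_{\bar r - q} + u_r + u_{\bar r + q}$ for $q < r < (p-1)q$; and $u_{2q-1} u_r = u_{\bar r - q}$ for $(p-1)q \le r \le pq$ (all indices coprime to $p$). Prove, assuming these rules and the rule $u_{q-1}u_r = u_{\bar r}$, that the $\mathbb{Z}$-span of $\{u_1\} \cup \{u_{2kq \pm 1} : 1 \le k \le (p-1)/2\}$ (for $p$ odd) is closed under multiplication by $u_{2q-1}$. -/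
/-- In the quotient of the Green ring of `ℤ/p^{n+1}` by negligibles, with `q = pⁿ`,
`r̄ = q·(r/q) + (q - r % q)`, and Green's fusion rules for `u_{2q-1}`, the `ℤ`-span of
`{u₁} ∪ {u_{2kq ± 1} : 1 ≤ k ≤ (p-1)/2}` is closed under multiplication by `u_{2q-1}`. -/
theorem stmt_12 (p : ℕ) (hp : p.Prime) (hodd : Odd p) (n : ℕ) (hn : 1 ≤ n)
    (q : ℕ) (hq : q = p ^ n) (R : Type) [CommRing R] (u : ℕ → R)
    (bar : ℕ → ℕ) (hbar : ∀ r, bar r = q * (r / q) + (q - r % q))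
    (h1 : ∀ r, 1 ≤ r → r ≤ q → r.Coprime p →
      u (2 * q - 1) * u r = u (bar r + q))
    (h2 : ∀ r, q < r → r < (p - 1) * q → r.Coprime p →
      u (2 * q - 1) * u r = u (bar r - q) + u r + u (bar r + q))
    (h3 : ∀ r, (p - 1) * q ≤ r → r ≤ p * q → r.Coprime p →
      u (2 * q - 1) * u r = u (bar r - q))
    (T : Set R)
    (hT : T = {u 1} ∪ {x | ∃ k, 1 ≤ k ∧ k ≤ (p - 1) / 2 ∧
      (x = u (2 * k * q + 1) ∨ x = u (2 * k * q - 1))}) :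
    ∀ x ∈ T, u (2 * q - 1) * x ∈ Submodule.span ℤ T := by
  obtain ⟨d, rfl⟩ := hodd
  have hd1 : 1 ≤ d := by
    by_contra h
    interval_cases d
    · simp at hp; exact absurd hp Nat.not_prime_one
  have hp3 : 3 ≤ 2 * d + 1 := by omega
  have hq3 : 3 ≤ q := by
    rw [hq]
    calc 3 ≤ 2 * d + 1 := hp3
    _ ≤ (2 * d + 1) ^ n := Nat.le_self_pow (by omega) _
  have hpq : (2 * d + 1) ∣ q := hq ▸ dvd_pow_self _ (by omega)
  -- bar on canonical form
  have hbar' : ∀ a b, 0 < b → b < q → bar (q * a + b) = q * a + (q - b) := by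
    intro a b hb0 hb
    rw [hbar, Nat.mul_add_div (by omega), Nat.div_eq_of_lt hb, Nat.add_zero,
      Nat.mul_add_mod, Nat.mod_eq_of_lt hb]
  -- coprimality helpers
  have hdvd : ∀ k : ℕ, (2 * d + 1) ∣ 2 * k * q := fun k => hpq.mul_left (2 * k)
  have cop1 : ∀ k : ℕ, (2 * k * q + 1).Coprime (2 * d + 1) := by
    intro k
    refine Nat.Coprime.symm ((hp.coprime_iff_not_dvd).mpr ?_)
    intro h
    have := (Nat.dvd_add_right (hdvd k)).mp h
    have := Nat.le_of_dvd one_pos this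
    omega
  have cop2 : ∀ k : ℕ, 1 ≤ k → (2 * k * q - 1).Coprime (2 * d + 1) := by
    intro k hk
    refine Nat.Coprime.symm ((hp.coprime_iff_not_dvd).mpr ?_)
    intro h
    have h' := Nat.dvd_sub (hdvd k) h
    have hkq : q ≤ k * q := Nat.le_mul_of_pos_left q (by omega)
    have e1 : 2 * k * q = k * q + k * q := by ring
    have : 2 * k * q - (2 * k * q - 1) = 1 := by omega
    rw [this] at h'
    have := Nat.le_of_dvd one_pos h'
    omega
  -- membership helpers
  have hmem1 : u 1 ∈ T := by rw [hT]; exact Set.mem_union_left _ rfl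
  have hmemP : ∀ m : ℕ, 1 ≤ m → m ≤ d → u (2 * m * q + 1) ∈ T := by
    intro m hm1 hm2
    rw [hT]
    exact Set.mem_union_right _ ⟨m, hm1, by omega, Or.inl rfl⟩
  have hmemM : ∀ m : ℕ, 1 ≤ m → m ≤ d → u (2 * m * q - 1) ∈ T := by
    intro m hm1 hm2
    rw [hT]
    exact Set.mem_union_right _ ⟨m, hm1, by omega, Or.inr rfl⟩
  intro x hx
  rw [hT] at hx
  rcases hx with hx | ⟨k, hk1, hk2, hx | hx⟩
  · -- x = u 1
    rcases hx with rfl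
    have e : (1 : ℕ) = q * 0 + 1 := by omega
    rw [show u 1 = u (q * 0 + 1) from by rw [← e]]
    rw [h1 _ (by omega) (by omega) (by simp)]
    rw [hbar' 0 1 one_pos (by omega)]
    have e2 : q * 0 + (q - 1) + q = 2 * 1 * q - 1 := by
      have : 2 * 1 * q = q + q := by ring
      omega
    rw [e2]
    exact Submodule.subset_span (hmemM 1 le_rfl hd1)
  · -- x = u (2kq + 1)
    rcases hx with rfl
    have hkd : k ≤ d := by omega
    have hkq : q ≤ k * q := Nat.le_mul_of_pos_left q (by omega)
    have e1 : 2 * k * q = k * q + k * q := by ring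
    have ecan : 2 * k * q + 1 = q * (2 * k) + 1 := by ring
    have hbarv : bar (2 * k * q + 1) = q * (2 * k) + (q - 1) := by
      rw [ecan]; exact hbar' (2 * k) 1 one_pos (by omega)
    have e6 : q * (2 * k) = k * q + k * q := by ring
    rcases lt_or_eq_of_le hkd with hlt | rfl
    · -- k < d : use h2
      have hmul : (k + 1) * q ≤ d * q := Nat.mul_le_mul_right q (by omega)
      have e5 : (k + 1) * q = k * q + q := by ring
      have edq : (2 * d + 1 - 1) * q = d * q + d * q := by
        have h : 2 * d + 1 - 1 = 2 * d := by omega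
        rw [h]; ring
      rw [h2 _ (by omega) (by omega) (cop1 k), hbarv]
      have eA : q * (2 * k) + (q - 1) - q = 2 * k * q - 1 := by omega
      have eC : q * (2 * k) + (q - 1) + q = 2 * (k + 1) * q - 1 := by
        have : 2 * (k + 1) * q = k * q + k * q + q + q := by ring
        omega
      rw [eA, eC]
      exact add_mem (add_mem (Submodule.subset_span (hmemM k hk1 hkd))
        (Submodule.subset_span (hmemP k hk1 hkd)))
        (Submodule.subset_span (hmemM (k + 1) (by omega) (by omega)))
    · -- k = d : use h3
      have edq : (2 * k + 1 - 1) * q = k * q + k * q := by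
        have h : 2 * k + 1 - 1 = 2 * k := by omega
        rw [h]; ring
      have epq : (2 * k + 1) * q = k * q + k * q + q := by ring
      rw [h3 _ (by omega) (by omega) (cop1 k), hbarv]
      have eA : q * (2 * k) + (q - 1) - q = 2 * k * q - 1 := by omega
      rw [eA]
      exact Submodule.subset_span (hmemM k hk1 le_rfl)
  · -- x = u (2kq - 1)
    rcases hx with rfl
    have hkd : k ≤ d := by omega
    obtain ⟨j, rfl⟩ : ∃ j, k = j + 1 := ⟨k - 1, by omega⟩
    have hjq : q ≤ (j + 1) * q := Nat.le_mul_of_pos_left q (by omega)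
    have e1 : 2 * (j + 1) * q = (j + 1) * q + (j + 1) * q := by ring
    have ejq : (j + 1) * q = j * q + q := by ring
    have ecan : 2 * (j + 1) * q - 1 = q * (2 * j + 1) + (q - 1) := by
      have : q * (2 * j + 1) = j * q + j * q + q := by ring
      omega
    have hbarv : bar (q * (2 * j + 1) + (q - 1)) = q * (2 * j + 1) + (q - (q - 1)) :=
      hbar' (2 * j + 1) (q - 1) (by omega) (by omega)
    have hjd : j + 1 ≤ d := hkd
    have hmul : (j + 1) * q ≤ d * q := Nat.mul_le_mul_right q hjd
    have edq : (2 * d + 1 - 1) * q = d * q + d * q := by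
      have h : 2 * d + 1 - 1 = 2 * d := by omega
      rw [h]; ring
    rw [ecan, h2 _ (by omega) (by omega) (by rw [← ecan]; exact cop2 (j + 1) (by omega)),
      hbarv]
    have eqj : q * (2 * j + 1) = j * q + j * q + q := by ring
    have eA : q * (2 * j + 1) + (q - (q - 1)) - q = 2 * j * q + 1 := by
      have : 2 * j * q = j * q + j * q := by ring
      omega
    have eB : q * (2 * j + 1) + (q - 1) = 2 * (j + 1) * q - 1 := by omega
    have eC : q * (2 * j + 1) + (q - (q - 1)) + q = 2 * (j + 1) * q + 1 := by omega
    rw [eA, eB, eC]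
    refine add_mem (add_mem (Submodule.subset_span ?_)
      (Submodule.subset_span (hmemM (j + 1) (by omega) hjd)))
      (Submodule.subset_span (hmemP (j + 1) (by omega) hjd))
    rcases Nat.eq_zero_or_pos j with rfl | hj
    · simpa using hmem1
    · exact hmemP j hj (by omega)
end

section
/- Let $p \ge 5$ be prime, $q = e^{\pi i/p}$, and $[k]_q = \sin(\pi k/p)/\sin(\pi/p)$. Suppose $d = \sum_{i=1}^{p-1} m_i [i]_q$ with $m_i \in \mathbb{Z}_{\ge 0}$. Then $\sum_{i,j=1}^{p-1} \min(i, p-i, j, p-j)\, m_i m_j \le \frac{\pi}{2} d^2$. -/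
open Real

lemma stmt14_aux (p k : ℕ) (hp : 2 ≤ p) (h1 : 1 ≤ k) (h2 : k ≤ p - 1) :
    sin (π / p) ≤ sin (π * k / p) ∧
      min (k:ℝ) ((p:ℝ) - k) ≤ π / 2 * (sin (π * k / p) / sin (π / p)) := by
  have hp0 : (0:ℝ) < p := by positivity
  have hp1 : (1:ℝ) < p := by exact_mod_cast hp.trans_lt' one_lt_two
  have hkp : k ≤ p := le_trans h2 (Nat.sub_le _ _)
  set a : ℕ := min k (p - k) with ha
  have ha1 : 1 ≤ a := by
    have : 1 ≤ p - k := by omega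
    exact le_min h1 this
  have h2a : 2 * a ≤ p := by
    have h₁ : a ≤ k := min_le_left _ _
    have h₂ : a ≤ p - k := min_le_right _ _
    omega
  have hcast : ((p - k : ℕ) : ℝ) = (p : ℝ) - k := by
    push_cast [Nat.cast_sub hkp]; ring
  have hmin_eq : min (k:ℝ) ((p:ℝ) - k) = (a:ℝ) := by
    rcases le_or_gt k (p - k) with h | h
    · rw [ha, min_eq_left h]
      rw [min_eq_left]
      rw [← hcast]; exact_mod_cast h
    · rw [ha, min_eq_right h.le]
      rw [hcast.symm, min_eq_right]
      exact_mod_cast h.le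
  have hsin_eq : sin (π * k / p) = sin (π * a / p) := by
    rcases le_or_gt k (p - k) with h | h
    · rw [ha, min_eq_left h]
    · rw [ha, min_eq_right h.le, hcast]
      have : π * ((p:ℝ) - k) / p = π - π * k / p := by field_simp
      rw [this, Real.sin_pi_sub]
  have haR : (0:ℝ) < a := by exact_mod_cast ha1
  have haR1 : (1:ℝ) ≤ a := by exact_mod_cast ha1
  have hxle : π * a / p ≤ π / 2 := by
    rw [div_le_div_iff₀ hp0 (by norm_num)]
    have : (2:ℝ) * a ≤ p := by exact_mod_cast h2a
    nlinarith [pi_pos]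
  have hx0 : (0:ℝ) ≤ π * a / p := by positivity
  have hjordan : 2 / π * (π * a / p) ≤ sin (π * a / p) := mul_le_sin hx0 hxle
  have hjval : 2 / π * (π * a / p) = 2 * a / p := by
    field_simp
  have hsinp_le : sin (π / p) ≤ π / p := Real.sin_le (by positivity)
  have hsinp_pos : 0 < sin (π / p) := by
    apply Real.sin_pos_of_pos_of_lt_pi (by positivity)
    rw [div_lt_iff₀ hp0]
    nlinarith [pi_pos]
  constructor
  · rw [hsin_eq]
    have h1a : π / p ≤ π * a / p := by
      gcongr
      nlinarith [pi_pos]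
    exact Real.sin_le_sin_of_le_of_le_pi_div_two
      (by nlinarith [pi_pos, div_pos pi_pos hp0]) hxle h1a
  · rw [hsin_eq, hmin_eq, ← mul_div_assoc, le_div_iff₀ hsinp_pos]
    calc (a:ℝ) * sin (π / p) ≤ (a:ℝ) * (π / p) :=
          mul_le_mul_of_nonneg_left hsinp_le haR.le
      _ = π / 2 * (2 / π * (π * a / p)) := by field_simp
      _ ≤ π / 2 * sin (π * a / p) :=
          mul_le_mul_of_nonneg_left hjordan (by positivity)

/-- For a prime `p ≥ 5`, `[k]_q = sin(πk/p)/sin(π/p)` and `d = ∑ mᵢ [i]_q` with `mᵢ ∈ ℕ`: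
`∑_{i,j} min(i, p-i, j, p-j) mᵢ mⱼ ≤ (π/2) d²`. -/
theorem stmt_14 (p : ℕ) (hp : p.Prime) (h5 : 5 ≤ p) (m : ℕ → ℕ) (d : ℝ)
    (hd : d = ∑ i ∈ Finset.Icc 1 (p - 1), (m i : ℝ) * (sin (π * i / p) / sin (π / p))) :
    ∑ i ∈ Finset.Icc 1 (p - 1), ∑ j ∈ Finset.Icc 1 (p - 1),
        (min (min i (p - i)) (min j (p - j)) : ℝ) * m i * m j ≤ (π / 2) * d ^ 2 := by
  have hp2 : 2 ≤ p := by omega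
  have hp0 : (0:ℝ) < p := by positivity
  have hp1 : (1:ℝ) < p := by exact_mod_cast hp2.trans_lt' one_lt_two
  have hsinp_pos : 0 < sin (π / p) := by
    apply Real.sin_pos_of_pos_of_lt_pi (by positivity)
    rw [div_lt_iff₀ hp0]
    nlinarith [pi_pos]
  set f : ℕ → ℝ := fun i => (m i : ℝ) * (sin (π * i / p) / sin (π / p)) with hf
  have key : ∀ i ∈ Finset.Icc 1 (p-1), ∀ j ∈ Finset.Icc 1 (p-1),
      (min (min i (p - i)) (min j (p - j)) : ℝ) * m i * m j ≤ π / 2 * (f i * f j) := by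
    intro i hi j hj
    simp only [Finset.mem_Icc] at hi hj
    obtain ⟨hA, hB⟩ := stmt14_aux p i hp2 hi.1 hi.2
    obtain ⟨hA', hB'⟩ := stmt14_aux p j hp2 hj.1 hj.2
    set qi := sin (π * i / p) / sin (π / p) with hqi'
    set qj := sin (π * j / p) / sin (π / p) with hqj'
    have hqi : (1:ℝ) ≤ qi := by
      rw [hqi', le_div_iff₀ hsinp_pos]; linarith
    have hqj : (1:ℝ) ≤ qj := by
      rw [hqj', le_div_iff₀ hsinp_pos]; linarith
    have hmi : (0:ℝ) ≤ m i := Nat.cast_nonneg _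
    have hmj : (0:ℝ) ≤ m j := Nat.cast_nonneg _
    have hmin : (min (min (i:ℝ) ((p:ℝ) - i)) (min (j:ℝ) ((p:ℝ) - j))) ≤ π / 2 * qi :=
      le_trans (min_le_left _ _) hB
    have hM : (0:ℝ) ≤ (m i : ℝ) * m j := mul_nonneg hmi hmj
    simp only [hf]
    calc (min (min (i:ℝ) ((p:ℝ) - i)) (min (j:ℝ) ((p:ℝ) - j))) * m i * m j
        = (min (min (i:ℝ) ((p:ℝ) - i)) (min (j:ℝ) ((p:ℝ) - j))) * ((m i : ℝ) * m j) := by ring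
      _ ≤ π / 2 * qi * ((m i : ℝ) * m j) := mul_le_mul_of_nonneg_right hmin hM
      _ ≤ π / 2 * qi * ((m i : ℝ) * m j) * qj := by
          nlinarith [pi_pos, mul_nonneg (mul_nonneg (by positivity : (0:ℝ) ≤ π/2*qi) hmi) hmj]
      _ = π / 2 * ((m i : ℝ) * qi * ((m j : ℝ) * qj)) := by ring
  calc ∑ i ∈ Finset.Icc 1 (p - 1), ∑ j ∈ Finset.Icc 1 (p - 1),
        (min (min i (p - i)) (min j (p - j)) : ℝ) * m i * m j
      ≤ ∑ i ∈ Finset.Icc 1 (p - 1), ∑ j ∈ Finset.Icc 1 (p - 1), π / 2 * (f i * f j) := by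
        apply Finset.sum_le_sum
        intro i hi
        exact Finset.sum_le_sum (key i hi)
    _ = π / 2 * d ^ 2 := by
        simp_rw [← Finset.mul_sum, ← Finset.sum_mul]
        rw [hd]; ring
end
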